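/- For every n ∈ ℕ one has #L_n(u) ≤ λ C² (#A)² n. -/

import Mathlib

open List Filter

section Defs

variable {A : Type*}

/-- The segment `u_[i,j)` of the sequence `u`. -/
def seg (u : ℕ → A) (i j : ℕ) : List A :=
  (List.range (j - i)).map fun k => u (i + k)

/-- A substitution applied to a word, letter by letter. -/
def substWord (σ : A → List A) (w : List A) : List A := w.flatMap σ

/-- `σ^p` applied to a word. -/
def substPow (σ : A → List A) (p : ℕ) (w : List A) : List A := (substWord σ)^[p] w

/-- A substitution is primitive if some power of it sends every letter to a word
containing every letter. -/
def IsPrimitiveSubst (σ : A → List A) : Prop :=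
  ∃ k : ℕ, ∀ a b : A, a ∈ substPow σ k [b]

/-- `u` is a fixed point of `σ`: the image of every prefix of `u` is again a prefix of `u`. -/
def IsFixedPoint (σ : A → List A) (u : ℕ → A) : Prop :=
  ∀ m : ℕ, substWord σ (seg u 0 m) = seg u 0 (substWord σ (seg u 0 m)).length

/-- `u` is aperiodic under the left shift: `T^i u ≠ u` for all `i ≥ 1`. -/
def AperiodicSeq (u : ℕ → A) : Prop := ∀ i : ℕ, 1 ≤ i → (fun n => u (n + i)) ≠ u

/-- The set `E_p` of natural `p`-cutting points. -/
def cutPoints (σ : A → List A) (u : ℕ → A) (p : ℕ) : Set ℕ :=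
  { m | ∃ n : ℕ, m = (substPow σ p (seg u 0 n)).length }

/-- Unilateral recognizability of `σ` (with fixed point `u`). -/
def UnilaterallyRecognizable (σ : A → List A) (u : ℕ → A) : Prop :=
  ∃ L : ℕ, 1 ≤ L ∧ ∀ i j : ℕ,
    seg u i (i + L) = seg u j (j + L) → i ∈ cutPoints σ u 1 → j ∈ cutPoints σ u 1

/-- `L_n(u)`: the set of factors of `u` of length `n`. -/
def factors (u : ℕ → A) (n : ℕ) : Set (List A) := { w | ∃ i : ℕ, w = seg u i (i + n) }

/-- `L(u)`: the language of `u` (including the empty word). -/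
def lang (u : ℕ → A) : Set (List A) := { w | ∃ i n : ℕ, w = seg u i (i + n) }

/-- `w^n`: the concatenation of `n` copies of `w`. -/
def wpow (w : List A) (n : ℕ) : List A := (List.replicate n w).flatten

/-- A nonempty word `v` is primitive if `v = w^n` with `w` nonempty forces `w = v`. -/
def PrimitiveWord (v : List A) : Prop :=
  ∀ w : List A, w ≠ [] → ∀ n : ℕ, 1 ≤ n → v = wpow w n → w = v

/-- `g` is a gap of occurrences of `w` in `u` if every interval of length `g` in `ℤ₊`
contains an occurrence of `w`. -/
def IsGap (u : ℕ → A) (w : List A) (g : ℕ) : Prop := ∀ i : ℕ, w <:+: seg u i (i + g)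

/-- The minimal gap of a word. -/
noncomputable def minGap (u : ℕ → A) (w : List A) : ℕ := sInf { g | IsGap u w g }

/-- `g`: the maximum over `w ∈ L₂(u)` of the minimal gap of `w`. -/
noncomputable def gapConst (u : ℕ → A) : ℕ :=
  sSup { m | ∃ w ∈ factors u 2, m = minGap u w }

/-- A natural `p`-cutting `{α, σ^p(u_{i'}), …, σ^p(u_{i'+k-1}), β}` of `u_[i,i+ℓ)`. -/
def IsNaturalCutting (σ : A → List A) (u : ℕ → A) (p i ℓ : ℕ)
    (α : List A) (i' k : ℕ) (β : List A) : Prop :=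
  1 ≤ k ∧
  α <:+ substPow σ p [u (i' - 1)] ∧
  β <+: substPow σ p [u (i' + k)] ∧
  seg u i (i + ℓ) = α ++ substPow σ p (seg u i' (i' + k)) ++ β ∧
  i + α.length = (substPow σ p (seg u 0 i')).length

section Fin

variable [Fintype A] [Nonempty A] [DecidableEq A]

/-- The incidence matrix of a substitution: the `(a,b)` entry is `|σ(a)|_b`. -/
def incMatrix (σ : A → List A) : Matrix A A ℕ := Matrix.of fun a b => (σ a).count b

/-- The incidence matrix as a real matrix. -/
noncomputable def incMatrixR (σ : A → List A) : Matrix A A ℝ :=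
  Matrix.of fun a b => ((σ a).count b : ℝ)

/-- `S_p = max_{a ∈ A} |σ^p(a)|`. -/
def Sp (σ : A → List A) (p : ℕ) : ℕ :=
  Finset.univ.sup' Finset.univ_nonempty fun a => (substPow σ p [a]).length

/-- `I_p = min_{a ∈ A} |σ^p(a)|`. -/
def Ip (σ : A → List A) (p : ℕ) : ℕ :=
  Finset.univ.inf' Finset.univ_nonempty fun a => (substPow σ p [a]).length

/-- `C = ⌈(max_b β_b)/(min_b β_b)⌉` for a positive eigenvector `β`. -/
noncomputable def Cst (β : A → ℝ) : ℕ :=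
  ⌈(Finset.univ.sup' Finset.univ_nonempty β) / (Finset.univ.inf' Finset.univ_nonempty β)⌉₊

/-- `K = ⌈λ C² max{2(g+1), (#A)²}⌉`. -/
noncomputable def Kst (u : ℕ → A) (lam : ℝ) (β : A → ℝ) : ℕ :=
  ⌈lam * (Cst β : ℝ) ^ 2 *
    max (2 * ((gapConst u : ℝ) + 1)) ((Fintype.card A : ℝ) ^ 2)⌉₊

/-- The constant `p₀` of Lemma 4.2. -/
noncomputable def p0 (u : ℕ → A) (lam : ℝ) (β : A → ℝ) : ℕ :=
  (Kst u lam β) ^ 2 * ((Cst β) ^ 4 * (Kst u lam β + 1) + 2 * (Cst β) ^ 2 + 1) *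
    (∑ n ∈ Finset.Icc ((Cst β) ^ 2 * (Kst u lam β + 1) + 2)
        ((Kst u lam β + 1) * (Cst β) ^ 6 + 2 * (Cst β) ^ 4 + (Cst β) ^ 2 + 2), n) + 1

/-- The constant `L₀ = (C⁴(K+1)+2C²+1) S_{p₀}`. -/
noncomputable def L0 (σ : A → List A) (u : ℕ → A) (lam : ℝ) (β : A → ℝ) : ℕ :=
  ((Cst β) ^ 4 * (Kst u lam β + 1) + 2 * (Cst β) ^ 2 + 1) * Sp σ (p0 u lam β)

/-- The ℓ¹ norm of a vector. -/
def l1norm (f : A → ℝ) : ℝ := ∑ a, |f a|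

/-- The projective metric on positive row vectors. -/
noncomputable def projMetric (x y : A → ℝ) : ℝ :=
  Real.log ((Finset.univ.sup' Finset.univ_nonempty fun a => x a / y a) /
    (Finset.univ.inf' Finset.univ_nonempty fun a => x a / y a))

/-- The Birkhoff contraction coefficient of a matrix. -/
noncomputable def birkhoff (M : Matrix A A ℝ) : ℝ :=
  sSup { r | ∃ x y : A → ℝ, (∀ a, 0 < x a) ∧ (∀ a, 0 < y a) ∧
    LinearIndependent ℝ ![x, y] ∧
    r = projMetric (Matrix.vecMul x M) (Matrix.vecMul y M) / projMetric x y }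

end Fin

/-- Membership in the vertex set `V^*`: pairs `(xac, ybc)` of factors of `u` of length
`N + L₁ + 1` with `a ≠ b` and `|c| = L₁`. -/
def memVstar (u : ℕ → A) (N L₁ : ℕ) (p : List A × List A) : Prop :=
  ∃ (x y c : List A) (a b : A), a ≠ b ∧
    x.length = N ∧ y.length = N ∧ c.length = L₁ ∧
    p.1 = x ++ a :: c ∧ p.2 = y ++ b :: c ∧
    p.1 ∈ factors u (N + L₁ + 1) ∧ p.2 ∈ factors u (N + L₁ + 1)

/-- An edge between representatives: there is a word `w` with `s'w` a suffix of `σ(s)` and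
`t'w` a suffix of `σ(t)`. -/
def edgeRep (σ : A → List A) (p q : List A × List A) : Prop :=
  ∃ w : List A, w ≠ [] ∧ (q.1 ++ w) <:+ substWord σ p.1 ∧ (q.2 ++ w) <:+ substWord σ p.2

/-- An edge in the graph `G` between the unordered pairs represented by `p` and `q`. -/
def graphEdge (σ : A → List A) (p q : List A × List A) : Prop :=
  edgeRep σ p q ∨ edgeRep σ p q.swap ∨ edgeRep σ p.swap q ∨ edgeRep σ p.swap q.swap

/-- A representative generates a gap of natural 1-cutting points. -/
def genGapRep (σ : A → List A) (p : List A × List A) : Prop :=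
  ∃ (α β : A) (γ δ : List A),
    (σ α <:+ σ β ∧ σ α ≠ σ β) ∧
    List.Forall₂ (fun s t => σ s = σ t) γ δ ∧
    (α :: γ) <:+ substWord σ p.1 ∧ (β :: δ) <:+ substWord σ p.2

/-- The unordered pair represented by `p` generates a gap of natural 1-cutting points. -/
def genGap (σ : A → List A) (p : List A × List A) : Prop :=
  genGapRep σ p ∨ genGapRep σ p.swap

/-- The list of consecutive two-letter blocks of a word. -/
def pairsList (l : List A) : List (List A) :=
  List.zipWith (fun a b => [a, b]) l l.tail

end Defs

/-!
Let `φ(w) = ∑ β_{w_i}` be the `β`-weight of a word. Since `β` is a right eigenvector of the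
incidence matrix, `φ(σ^p(a)) = λ^p β_a`, so `|σ^p(a)|` lies between `λ^p / C` and `C λ^p`.
Primitivity makes the lengths `|σ^p(a)|` grow, so there is a least `p ≥ 1` with `|σ^p(a)| ≥ n`
for all letters `a`; minimality gives `λ^(p-1) ≤ C n`, hence `|σ^p(a)| ≤ λ C² n`.
As `u = σ^p(u)` and `|σ^p(u_{j+1})| ≥ n`, a factor of length `n` starting inside the block
`σ^p(u_j)` is contained in `σ^p(u_j u_{j+1})`, so it is determined by `u_j`, `u_{j+1}` and an
offset `< |σ^p(u_j)|`.
-/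

section Words

variable {A : Type*}

theorem seg_length (u : ℕ → A) (i j : ℕ) : (seg u i j).length = j - i := by
  simp [seg]

theorem seg_append (u : ℕ → A) {i j k : ℕ} (hij : i ≤ j) (hjk : j ≤ k) :
    seg u i k = seg u i j ++ seg u j k := by
  unfold seg
  rw [show k - i = (j - i) + (k - j) by omega, List.range_add, List.map_append, List.map_map]
  congr 1
  refine List.map_congr_left fun d _ => ?_
  simp only [Function.comp_apply]
  congr 1
  omega

theorem seg_succ (u : ℕ → A) (i : ℕ) : seg u i (i + 1) = [u i] := by
  simp [seg]

theorem seg_eq_take_drop {u : ℕ → A} {i j k n : ℕ} (hij : i ≤ j) (hk : j + n ≤ k) :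
    seg u j (j + n) = ((seg u i k).drop (j - i)).take n := by
  rw [seg_append u hij (by omega), List.drop_left' (seg_length u i j),
    seg_append u (Nat.le_add_right j n) hk, List.take_left' (by rw [seg_length]; omega)]

theorem substWord_append (τ : A → List A) (v w : List A) :
    substWord τ (v ++ w) = substWord τ v ++ substWord τ w :=
  List.flatMap_append

theorem mul_length_le_length_substWord {τ : A → List A} {c : ℕ}
    (h : ∀ a, c ≤ (τ a).length) (w : List A) : c * w.length ≤ (substWord τ w).length := by
  induction w with
  | nil => simp
  | cons a w ih =>
    rw [show substWord τ (a :: w) = τ a ++ substWord τ w from rfl, List.length_append,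
      List.length_cons, Nat.mul_succ]
    linarith [h a]

theorem substPow_succ (σ : A → List A) (p : ℕ) (w : List A) :
    substPow σ (p + 1) w = substWord σ (substPow σ p w) :=
  Function.iterate_succ_apply' _ _ _

theorem substPow_add (σ : A → List A) (p q : ℕ) (w : List A) :
    substPow σ (p + q) w = substPow σ p (substPow σ q w) :=
  Function.iterate_add_apply _ _ _ _

theorem substPow_eq_substWord (σ : A → List A) (p : ℕ) (w : List A) :
    substPow σ p w = substWord (fun a => substPow σ p [a]) w := by
  induction p generalizing w with
  | zero => simp [substPow, substWord]
  | succ p ih =>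
    rw [substPow_succ, ih]
    simp only [substWord, List.flatMap_assoc, substPow_succ]

theorem IsFixedPoint.pow {σ : A → List A} {u : ℕ → A} (hfix : IsFixedPoint σ u) (p : ℕ) :
    IsFixedPoint (fun a => substPow σ p [a]) u := by
  intro m
  rw [← substPow_eq_substWord]
  induction p with
  | zero => simp [substPow, seg_length]
  | succ p ih =>
    rw [substPow_succ, ih]
    exact hfix _

theorem IsFixedPoint.substWord_seg {τ : A → List A} {u : ℕ → A} (hfix : IsFixedPoint τ u)
    {j k : ℕ} (hjk : j ≤ k) :
    substWord τ (seg u j k) =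
      seg u (substWord τ (seg u 0 j)).length (substWord τ (seg u 0 k)).length := by
  have hsplit :
      substWord τ (seg u 0 k) = substWord τ (seg u 0 j) ++ substWord τ (seg u j k) := by
    rw [← substWord_append, ← seg_append u (Nat.zero_le j) hjk]
  have hle : (substWord τ (seg u 0 j)).length ≤ (substWord τ (seg u 0 k)).length := by
    rw [hsplit, List.length_append]
    omega
  apply List.append_cancel_left (as := seg u 0 (substWord τ (seg u 0 j)).length)
  rw [← seg_append u (Nat.zero_le _) hle, ← hfix j, ← hfix k, hsplit]

theorem exists_le_lt_of_strictMono {m : ℕ → ℕ} (hm : StrictMono m) (h0 : m 0 = 0) (i : ℕ) :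
    ∃ j, m j ≤ i ∧ i < m (j + 1) := by
  have hex : ∃ j, i < m (j + 1) := ⟨i, (Nat.lt_succ_self i).trans_le (hm.id_le _)⟩
  refine ⟨Nat.find hex, ?_, Nat.find_spec hex⟩
  cases hj : Nat.find hex with
  | zero => simp [h0]
  | succ j => exact not_lt.mp (Nat.find_min hex (by omega))

theorem ncard_factors_le_of_isFixedPoint [Fintype A] {τ : A → List A} {u : ℕ → A}
    (hfix : IsFixedPoint τ u) {n S : ℕ} (hn : 1 ≤ n) (hlong : ∀ a, n ≤ (τ a).length)
    (hshort : ∀ a, (τ a).length ≤ S) :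
    (factors u n).ncard ≤ Fintype.card A ^ 2 * S := by
  let m : ℕ → ℕ := fun j => (substWord τ (seg u 0 j)).length
  have hm_succ : ∀ j, m (j + 1) = m j + (τ (u j)).length := by
    intro j
    show (substWord τ (seg u 0 (j + 1))).length = _
    rw [seg_append u (Nat.zero_le j) (Nat.le_succ j), seg_succ, substWord_append,
      List.length_append]
    simp [m, substWord]
  have hm_mono : StrictMono m := strictMono_nat_of_lt_succ fun j => by
    have := hlong (u j)
    have := hm_succ j
    omega
  have hm0 : m 0 = 0 := by simp [m, seg, substWord]
  let f : A × A × Fin S → List A := fun t => ((τ t.1 ++ τ t.2.1).drop t.2.2).take n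
  have hsub : factors u n ⊆ Set.range f := by
    rintro _ ⟨i, rfl⟩
    obtain ⟨j, hji, hij⟩ := exists_le_lt_of_strictMono hm_mono hm0 i
    have hblock : τ (u j) ++ τ (u (j + 1)) = seg u (m j) (m (j + 1 + 1)) := by
      rw [← hfix.substWord_seg (by omega : j ≤ j + 1 + 1),
        seg_append u (Nat.le_succ j) (Nat.le_succ _), seg_succ, seg_succ]
      simp [substWord]
    refine ⟨(u j, u (j + 1), ⟨i - m j, ?_⟩), ?_⟩
    · have := hshort (u j)
      have := hm_succ j
      omega
    · show ((τ (u j) ++ τ (u (j + 1))).drop (i - m j)).take n = _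
      rw [hblock, ← seg_eq_take_drop hji]
      have := hm_succ (j + 1)
      have := hlong (u (j + 1))
      omega
  calc (factors u n).ncard ≤ (Set.range f).ncard := Set.ncard_le_ncard hsub (Set.finite_range f)
    _ ≤ Nat.card (A × A × Fin S) := by
      rw [← Nat.card_coe_set_eq]
      exact Finite.card_range_le f
    _ = Fintype.card A ^ 2 * S := by simp [Nat.card_eq_fintype_card, sq, mul_assoc]

theorem IsPrimitiveSubst.exists_le_length_substPow [Fintype A] {σ : A → List A}
    (hprim : IsPrimitiveSubst σ) (h2 : 2 ≤ Fintype.card A) (n : ℕ) :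
    ∃ p, ∀ a, n ≤ (substPow σ (p + 1) [a]).length := by
  classical
  obtain ⟨k, hk⟩ := hprim
  have hk2 : ∀ b, 2 ≤ (substPow σ k [b]).length := fun b =>
    calc 2 ≤ Fintype.card A := h2
      _ = (substPow σ k [b]).toFinset.card := by
        rw [Finset.eq_univ_of_forall fun a => List.mem_toFinset.2 (hk a b), Finset.card_univ]
      _ ≤ _ := List.toFinset_card_le _
  have hk0 : k ≠ 0 := by
    rintro rfl
    have : Fintype.card A ≤ 1 :=
      Fintype.card_le_one_iff.2 fun a b => by simpa [substPow] using hk a b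
    omega
  have hpow : ∀ j a, 2 ^ j ≤ (substPow σ (j * k) [a]).length := by
    intro j
    induction j with
    | zero => simp [substPow]
    | succ j ih =>
      intro a
      rw [Nat.succ_mul, substPow_add, substPow_eq_substWord σ (j * k)]
      calc 2 ^ (j + 1) = 2 ^ j * 2 := pow_succ 2 j
        _ ≤ 2 ^ j * (substPow σ k [a]).length := Nat.mul_le_mul_left _ (hk2 a)
        _ ≤ _ := mul_length_le_length_substWord ih _
  refine ⟨(n + 1) * k - 1, fun a => ?_⟩
  rw [Nat.sub_add_cancel (Nat.one_le_iff_ne_zero.2 (mul_ne_zero (Nat.succ_ne_zero n) hk0))]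
  have := Nat.lt_two_pow_self (n := n + 1)
  exact (by omega : n ≤ 2 ^ (n + 1)).trans (hpow (n + 1) a)

end Words

section Weight

variable {A : Type*}

def weight (β : A → ℝ) (w : List A) : ℝ := (w.map β).sum

theorem weight_append (β : A → ℝ) (v w : List A) :
    weight β (v ++ w) = weight β v + weight β w := by
  simp [weight]

theorem weight_singleton (β : A → ℝ) (a : A) : weight β [a] = β a := by
  simp [weight]

theorem weight_nonneg {β : A → ℝ} (hβ : ∀ a, 0 ≤ β a) (w : List A) : 0 ≤ weight β w :=
  List.sum_nonneg fun _ hx => by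
    obtain ⟨a, -, rfl⟩ := List.mem_map.1 hx
    exact hβ a

theorem weight_eq_sum_count [Fintype A] [DecidableEq A] (β : A → ℝ) (w : List A) :
    weight β w = ∑ b, (w.count b : ℝ) * β b := by
  rw [weight, Finset.sum_list_map_count]
  simp only [nsmul_eq_mul]
  exact Finset.sum_subset (Finset.subset_univ _) fun b _ hb => by
    simp [List.count_eq_zero_of_not_mem (mt List.mem_toFinset.2 hb)]

variable [Fintype A] [Nonempty A]

theorem inf'_mul_length_le_weight (β : A → ℝ) (w : List A) :
    Finset.univ.inf' Finset.univ_nonempty β * w.length ≤ weight β w := by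
  have := List.card_nsmul_le_sum (w.map β) (Finset.univ.inf' Finset.univ_nonempty β)
    fun x hx => by
      obtain ⟨a, -, rfl⟩ := List.mem_map.1 hx
      exact Finset.inf'_le β (Finset.mem_univ a)
  simpa [weight, mul_comm] using this

theorem weight_le_sup'_mul_length (β : A → ℝ) (w : List A) :
    weight β w ≤ Finset.univ.sup' Finset.univ_nonempty β * w.length := by
  have := List.sum_le_card_nsmul (w.map β) (Finset.univ.sup' Finset.univ_nonempty β)
    fun x hx => by
      obtain ⟨a, -, rfl⟩ := List.mem_map.1 hx
      exact Finset.le_sup' β (Finset.mem_univ a)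
  simpa [weight, mul_comm] using this

theorem div_le_Cst (β : A → ℝ) :
    Finset.univ.sup' Finset.univ_nonempty β / Finset.univ.inf' Finset.univ_nonempty β ≤
      Cst β :=
  Nat.le_ceil _

theorem one_le_Cst {β : A → ℝ} (hβ : ∀ a, 0 < β a) : 1 ≤ (Cst β : ℝ) := by
  have hinf : 0 < Finset.univ.inf' Finset.univ_nonempty β :=
    (Finset.lt_inf'_iff _).2 fun a _ => hβ a
  refine le_trans ?_ (div_le_Cst β)
  rw [one_le_div hinf]
  obtain ⟨a⟩ := ‹Nonempty A›
  exact (Finset.inf'_le β (Finset.mem_univ a)).trans (Finset.le_sup' β (Finset.mem_univ a))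

end Weight

section Eigenvector

variable {A : Type*} [Fintype A] [DecidableEq A] {σ : A → List A} {lam : ℝ} {β : A → ℝ}

theorem weight_letter (heig : (incMatrixR σ).mulVec β = lam • β) (a : A) :
    weight β (σ a) = lam * β a := by
  rw [weight_eq_sum_count]
  simpa [Matrix.mulVec, dotProduct, incMatrixR] using congrFun heig a

theorem weight_substWord (heig : (incMatrixR σ).mulVec β = lam • β) (w : List A) :
    weight β (substWord σ w) = lam * weight β w := by
  induction w with
  | nil => simp [weight, substWord]
  | cons a w ih =>
    rw [show substWord σ (a :: w) = σ a ++ substWord σ w from rfl, weight_append, ih,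
      weight_letter heig]
    simp only [weight, List.map_cons, List.sum_cons]
    ring

theorem weight_substPow (heig : (incMatrixR σ).mulVec β = lam • β) (p : ℕ) (w : List A) :
    weight β (substPow σ p w) = lam ^ p * weight β w := by
  induction p generalizing w with
  | zero => simp [substPow]
  | succ p ih => rw [substPow_succ, weight_substWord heig, ih, pow_succ']; ring

variable [Nonempty A]

theorem eigenvalue_nonneg (hβ : ∀ a, 0 < β a) (heig : (incMatrixR σ).mulVec β = lam • β) :
    0 ≤ lam := by
  obtain ⟨a⟩ := ‹Nonempty A›
  have := weight_nonneg (fun b => (hβ b).le) (σ a)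
  rw [weight_letter heig] at this
  exact nonneg_of_mul_nonneg_left this (hβ a)

theorem length_substPow_le (hβ : ∀ a, 0 < β a)
    (heig : (incMatrixR σ).mulVec β = lam • β) (p : ℕ) (a : A) :
    ((substPow σ p [a]).length : ℝ) ≤ Cst β * lam ^ p := by
  set mn := Finset.univ.inf' Finset.univ_nonempty β
  have hmn : 0 < mn := (Finset.lt_inf'_iff _).2 fun a _ => hβ a
  have hlam := pow_nonneg (eigenvalue_nonneg hβ heig) p
  set mx := Finset.univ.sup' Finset.univ_nonempty β
  have h : mn * (substPow σ p [a]).length ≤ mx * lam ^ p :=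
    calc mn * (substPow σ p [a]).length ≤ weight β (substPow σ p [a]) :=
          inf'_mul_length_le_weight β _
      _ = lam ^ p * β a := by rw [weight_substPow heig, weight_singleton]
      _ ≤ mx * lam ^ p := by
          rw [mul_comm]
          exact mul_le_mul_of_nonneg_right (Finset.le_sup' β (Finset.mem_univ a)) hlam
  calc ((substPow σ p [a]).length : ℝ) ≤ mx / mn * lam ^ p := by
        rw [div_mul_eq_mul_div, le_div_iff₀ hmn]
        linarith
    _ ≤ Cst β * lam ^ p := by gcongr; exact div_le_Cst β

theorem pow_le_length_substPow (hβ : ∀ a, 0 < β a)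
    (heig : (incMatrixR σ).mulVec β = lam • β) (p : ℕ) (a : A) :
    lam ^ p ≤ Cst β * (substPow σ p [a]).length := by
  set mn := Finset.univ.inf' Finset.univ_nonempty β
  have hmn : 0 < mn := (Finset.lt_inf'_iff _).2 fun a _ => hβ a
  have hlam := pow_nonneg (eigenvalue_nonneg hβ heig) p
  set mx := Finset.univ.sup' Finset.univ_nonempty β
  have h : lam ^ p * mn ≤ mx * (substPow σ p [a]).length :=
    calc lam ^ p * mn ≤ lam ^ p * β a :=
          mul_le_mul_of_nonneg_left (Finset.inf'_le β (Finset.mem_univ a)) hlam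
      _ = weight β (substPow σ p [a]) := by rw [weight_substPow heig, weight_singleton]
      _ ≤ mx * (substPow σ p [a]).length := weight_le_sup'_mul_length β _
  calc lam ^ p ≤ mx / mn * (substPow σ p [a]).length := by
        rw [div_mul_eq_mul_div, le_div_iff₀ hmn]
        linarith
    _ ≤ Cst β * (substPow σ p [a]).length := by gcongr; exact div_le_Cst β

theorem length_substPow_succ_le (hβ : ∀ a, 0 < β a)
    (heig : (incMatrixR σ).mulVec β = lam • β) {n q : ℕ} (hn : 1 ≤ n)
    (hq : q = 0 ∨ ∃ b, (substPow σ q [b]).length < n) (a : A) :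
    ((substPow σ (q + 1) [a]).length : ℝ) ≤ lam * Cst β ^ 2 * n := by
  have hlam := eigenvalue_nonneg hβ heig
  have hlam_pow : lam ^ q ≤ Cst β * n := by
    rcases hq with rfl | ⟨b, hb⟩
    · simpa using (one_le_Cst hβ).trans
        (le_mul_of_one_le_right (by positivity) (by exact_mod_cast hn))
    · calc lam ^ q ≤ Cst β * (substPow σ q [b]).length := pow_le_length_substPow hβ heig q b
        _ ≤ Cst β * n := by gcongr
  calc ((substPow σ (q + 1) [a]).length : ℝ) ≤ Cst β * lam ^ (q + 1) :=
        length_substPow_le hβ heig _ a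
    _ = lam * Cst β * lam ^ q := by ring
    _ ≤ lam * Cst β * (Cst β * n) := by gcongr
    _ = lam * Cst β ^ 2 * n := by ring

end Eigenvector

theorem stmt_5_general (A : Type*) [Fintype A] [DecidableEq A] [Nonempty A]
    (h2 : 2 ≤ Fintype.card A)
    (σ : A → List A)
    (hprim : IsPrimitiveSubst σ)
    (u : ℕ → A) (hfix : IsFixedPoint σ u)
    (lam : ℝ) (β : A → ℝ) (hβ : ∀ a, 0 < β a)
    (heig : (incMatrixR σ).mulVec β = lam • β) :
    ∀ n : ℕ, 1 ≤ n →
      ((factors u n).ncard : ℝ) ≤ lam * (Cst β : ℝ) ^ 2 * (Fintype.card A : ℝ) ^ 2 * n := by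
  intro n hn
  have hgrow := hprim.exists_le_length_substPow h2 n
  set q := Nat.find hgrow
  have hq : q = 0 ∨ ∃ b, (substPow σ q [b]).length < n := by
    cases hq : q with
    | zero => exact .inl rfl
    | succ r => exact .inr (by simpa using Nat.find_min hgrow (by omega : r < q))
  have hS : (Sp σ (q + 1) : ℝ) ≤ lam * Cst β ^ 2 * n := by
    obtain ⟨a, -, ha⟩ := Finset.exists_mem_eq_sup' Finset.univ_nonempty
      fun a => (substPow σ (q + 1) [a]).length
    rw [Sp, ha]
    exact length_substPow_succ_le hβ heig hn hq a
  have hcount := ncard_factors_le_of_isFixedPoint (S := Sp σ (q + 1)) (hfix.pow (q + 1)) hn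
    (Nat.find_spec hgrow) fun a => Finset.le_sup' (fun a => (substPow σ (q + 1) [a]).length)
      (Finset.mem_univ a)
  calc ((factors u n).ncard : ℝ) ≤ Fintype.card A ^ 2 * Sp σ (q + 1) := by
        exact_mod_cast hcount
    _ ≤ Fintype.card A ^ 2 * (lam * Cst β ^ 2 * n) := by gcongr
    _ = lam * Cst β ^ 2 * Fintype.card A ^ 2 * n := by ring

/-- Lemma 2.4 (word complexity): `#L_n(u) ≤ λ C² (#A)² n` for every `n ∈ ℕ`. -/
theorem stmt_5 (A : Type*) [Fintype A] [DecidableEq A] [Nonempty A]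
    (h2 : 2 ≤ Fintype.card A)
    (σ : A → List A) (hσne : ∀ a, σ a ≠ [])
    (hprim : IsPrimitiveSubst σ)
    (u : ℕ → A) (hfix : IsFixedPoint σ u) (hap : AperiodicSeq u)
    (lam : ℝ) (β : A → ℝ) (hβ : ∀ a, 0 < β a)
    (heig : (incMatrixR σ).mulVec β = lam • β) :
    ∀ n : ℕ, 1 ≤ n →
      ((factors u n).ncard : ℝ) ≤ lam * (Cst β : ℝ) ^ 2 * (Fintype.card A : ℝ) ^ 2 * n :=
  stmt_5_general A h2 σ hprim u hfix lam β hβ heig
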